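/- Suppose 𝒜 satisfies RIP(2r, δ). Then for every X, D ∈ ℝ^{n×r}, the Hessian quadratic form of f_c satisfies Q(D) := (2/m)( ‖𝒜(XDᵀ + DXᵀ)‖² + 2⟨𝒜(XXᵀ − M*), 𝒜(DDᵀ)⟩ ) ≤ 2(1+δ)·‖XDᵀ + DXᵀ‖_F² + 4·√((1+δ)·f_c(X))·‖D‖_F². -/

import Mathlib

open Matrix BigOperators

noncomputable section

/-- Frobenius inner product `⟨A, B⟩ = tr(Aᵀ B)`. -/
def finner {a b : ℕ} (A B : Matrix (Fin a) (Fin b) ℝ) : ℝ := (Aᵀ * B).trace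

/-- Frobenius norm. -/
def fnorm {a b : ℕ} (A : Matrix (Fin a) (Fin b) ℝ) : ℝ :=
  Real.sqrt (∑ i, ∑ j, (A i j) ^ 2)

/-- Euclidean norm on ℝ^m. -/
def vnorm {m : ℕ} (v : Fin m → ℝ) : ℝ := Real.sqrt (∑ i, (v i) ^ 2)

/-- Euclidean inner product on ℝ^m. -/
def vinner {m : ℕ} (v w : Fin m → ℝ) : ℝ := ∑ i, v i * w i

/-- Measurement operator 𝒜(M)_i = ⟨A_i, M⟩. -/
def calA {n m : ℕ} (A : Fin m → Matrix (Fin n) (Fin n) ℝ)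
    (M : Matrix (Fin n) (Fin n) ℝ) : Fin m → ℝ :=
  fun i => finner (A i) M

/-- Restricted isometry property with parameters (k, δ). -/
def RIP {n m : ℕ} (A : Fin m → Matrix (Fin n) (Fin n) ℝ) (k : ℕ) (δ : ℝ) : Prop :=
  0 ≤ δ ∧ δ < 1 ∧ ∀ M : Matrix (Fin n) (Fin n) ℝ, M.rank ≤ k →
    (1 - δ) * fnorm M ^ 2 ≤ (1 / (m : ℝ)) * vnorm (calA A M) ^ 2 ∧
    (1 / (m : ℝ)) * vnorm (calA A M) ^ 2 ≤ (1 + δ) * fnorm M ^ 2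

/-- Noiseless loss. -/
def fc {n m r : ℕ} (A : Fin m → Matrix (Fin n) (Fin n) ℝ)
    (Mstar : Matrix (Fin n) (Fin n) ℝ) (X : Matrix (Fin n) (Fin r) ℝ) : ℝ :=
  (1 / (m : ℝ)) * vnorm (calA A (X * Xᵀ - Mstar)) ^ 2

/-- Noisy loss. -/
def fnoisy {n m r : ℕ} (A : Fin m → Matrix (Fin n) (Fin n) ℝ) (y : Fin m → ℝ)
    (X : Matrix (Fin n) (Fin r) ℝ) : ℝ :=
  (1 / (m : ℝ)) * vnorm (fun i => calA A (X * Xᵀ) i - y i) ^ 2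

/-- Gradient of the noisy loss. -/
def gradf {n m r : ℕ} (A : Fin m → Matrix (Fin n) (Fin n) ℝ) (y : Fin m → ℝ)
    (X : Matrix (Fin n) (Fin r) ℝ) : Matrix (Fin n) (Fin r) ℝ :=
  (4 / (m : ℝ)) • ∑ i, (finner (A i) (X * Xᵀ) - y i) • (A i * X)

/-- Gradient of the noiseless loss. -/
def gradfc {n m r : ℕ} (A : Fin m → Matrix (Fin n) (Fin n) ℝ)
    (Mstar : Matrix (Fin n) (Fin n) ℝ) (X : Matrix (Fin n) (Fin r) ℝ) :
    Matrix (Fin n) (Fin r) ℝ :=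
  (4 / (m : ℝ)) • ∑ i, finner (A i) (X * Xᵀ - Mstar) • (A i * X)

/-- Spectral (operator) norm. -/
def specNorm {n : ℕ} (B : Matrix (Fin n) (Fin n) ℝ) : ℝ :=
  sSup {c | ∃ v : Fin n → ℝ, vnorm v ≤ 1 ∧ c = vnorm (B.mulVec v)}

open scoped Classical in
/-- positive semidefinite square root (junk value 0 if not PSD). -/
def matSqrt {k : ℕ} (P : Matrix (Fin k) (Fin k) ℝ) : Matrix (Fin k) (Fin k) ℝ :=
  if h : P.PosSemidef then
    (h.1.eigenvectorUnitary : Matrix (Fin k) (Fin k) ℝ) *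
      diagonal (fun i => Real.sqrt (h.1.eigenvalues i)) *
      (star h.1.eigenvectorUnitary : Matrix (Fin k) (Fin k) ℝ)
  else 0

/-- P-norm. -/
def pnorm {a k : ℕ} (P : Matrix (Fin k) (Fin k) ℝ) (X : Matrix (Fin a) (Fin k) ℝ) : ℝ :=
  fnorm (X * matSqrt P)

/-- dual P-norm. -/
def pdnorm {a k : ℕ} (P : Matrix (Fin k) (Fin k) ℝ) (X : Matrix (Fin a) (Fin k) ℝ) : ℝ :=
  fnorm (X * (matSqrt P)⁻¹)

/-- the preconditioner matrix XᵀX + ηI. -/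
def Pmat {n r : ℕ} (X : Matrix (Fin n) (Fin r) ℝ) (η : ℝ) : Matrix (Fin r) (Fin r) ℝ :=
  Xᵀ * X + η • 1

/-- k-th largest eigenvalue (1-indexed) of a Hermitian matrix. -/
def lamK {n : ℕ} {M : Matrix (Fin n) (Fin n) ℝ} (hM : M.IsHermitian) (k : ℕ) : ℝ :=
  (((List.ofFn hM.eigenvalues).insertionSort (· ≥ ·)).getD (k - 1) 0)

/-!
Write `Q(D) = 2 · (1/m)‖𝒜(XDᵀ + DXᵀ)‖² + 4 · (1/m)⟨𝒜(XXᵀ − M*), 𝒜(DDᵀ)⟩`. Since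
`XDᵀ + DXᵀ` has rank at most `2r` and `DDᵀ` rank at most `r`, the upper RIP bound applies to
both. This bounds the first term directly. For the second, Cauchy–Schwarz in `ℝᵐ` gives
`(1/m)⟨𝒜(XXᵀ − M*), 𝒜(DDᵀ)⟩ ≤ √f_c(X) · √((1/m)‖𝒜(DDᵀ)‖²) ≤ √f_c(X) · √(1+δ) ‖DDᵀ‖_F`,
and `‖DDᵀ‖_F ≤ ‖D‖_F²` by Cauchy–Schwarz on the entries of `DDᵀ`.
-/

lemma fnorm_nonneg {a b : ℕ} (A : Matrix (Fin a) (Fin b) ℝ) : 0 ≤ fnorm A :=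
  Real.sqrt_nonneg _

lemma fnorm_sq {a b : ℕ} (A : Matrix (Fin a) (Fin b) ℝ) :
    fnorm A ^ 2 = ∑ i, ∑ j, A i j ^ 2 :=
  Real.sq_sqrt (Finset.sum_nonneg fun _ _ => Finset.sum_nonneg fun _ _ => sq_nonneg _)

lemma vnorm_nonneg {m : ℕ} (v : Fin m → ℝ) : 0 ≤ vnorm v :=
  Real.sqrt_nonneg _

lemma vinner_le_vnorm_mul_vnorm {m : ℕ} (v w : Fin m → ℝ) :
    vinner v w ≤ vnorm v * vnorm w :=
  Real.sum_mul_le_sqrt_mul_sqrt _ _ _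

lemma smul_vinner_le_sqrt_mul_sqrt {m : ℕ} {c : ℝ} (hc : 0 ≤ c) (v w : Fin m → ℝ) :
    c * vinner v w ≤ √(c * vnorm v ^ 2) * √(c * vnorm w ^ 2) := calc
  c * vinner v w ≤ c * (vnorm v * vnorm w) :=
    mul_le_mul_of_nonneg_left (vinner_le_vnorm_mul_vnorm v w) hc
  _ = √(c * vnorm v ^ 2) * √(c * vnorm w ^ 2) := by
    rw [Real.sqrt_mul hc, Real.sqrt_mul hc, Real.sqrt_sq (vnorm_nonneg v),
      Real.sqrt_sq (vnorm_nonneg w), ← mul_mul_mul_comm, Real.mul_self_sqrt hc]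

lemma fnorm_mul_transpose_self_le {a b : ℕ} (D : Matrix (Fin a) (Fin b) ℝ) :
    fnorm (D * Dᵀ) ≤ fnorm D ^ 2 := by
  have hentry : ∀ i j, (D * Dᵀ) i j ^ 2 ≤ (∑ k, D i k ^ 2) * ∑ k, D j k ^ 2 := fun i j => by
    simpa only [mul_apply, transpose_apply] using
      Finset.sum_mul_sq_le_sq_mul_sq Finset.univ (D i) (D j)
  have hsq : fnorm (D * Dᵀ) ^ 2 ≤ (fnorm D ^ 2) ^ 2 := calc
    fnorm (D * Dᵀ) ^ 2 = ∑ i, ∑ j, (D * Dᵀ) i j ^ 2 := fnorm_sq _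
    _ ≤ ∑ i, ∑ j, (∑ k, D i k ^ 2) * ∑ k, D j k ^ 2 :=
      Finset.sum_le_sum fun i _ => Finset.sum_le_sum fun j _ => hentry i j
    _ = (fnorm D ^ 2) ^ 2 := by rw [fnorm_sq, sq, Finset.sum_mul_sum]
  exact (pow_le_pow_iff_left₀ (fnorm_nonneg _) (by positivity) two_ne_zero).1 hsq

theorem Matrix.rank_add_le {K : Type*} [Field K] {m n : Type*} [Fintype n]
    (A B : Matrix m n K) : (A + B).rank ≤ A.rank + B.rank := by
  have hrange : LinearMap.range (A + B).mulVecLin ≤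
      LinearMap.range A.mulVecLin ⊔ LinearMap.range B.mulVecLin := by
    rintro _ ⟨v, rfl⟩
    rw [mulVecLin_add]
    exact Submodule.add_mem_sup (LinearMap.mem_range_self _ v) (LinearMap.mem_range_self _ v)
  exact (Submodule.finrank_mono hrange).trans
    (Submodule.finrank_add_le_finrank_add_finrank _ _)

lemma rank_mul_transpose_add_le {K : Type*} [Field K] {m : Type*} [Fintype m] {r : ℕ}
    (X D : Matrix m (Fin r) K) : (X * Dᵀ + D * Xᵀ).rank ≤ 2 * r := calc
  (X * Dᵀ + D * Xᵀ).rank ≤ (X * Dᵀ).rank + (D * Xᵀ).rank := rank_add_le _ _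
  _ ≤ r + r := by
    gcongr <;>
      exact (rank_mul_le_left _ _).trans ((rank_le_card_width _).trans_eq (Fintype.card_fin r))
  _ = 2 * r := (two_mul r).symm

namespace RIP

variable {n m k : ℕ} {A : Fin m → Matrix (Fin n) (Fin n) ℝ} {δ : ℝ}

lemma one_add_nonneg (h : RIP A k δ) : 0 ≤ 1 + δ := by
  linarith [h.1]

lemma measure_sq_le (h : RIP A k δ) {M : Matrix (Fin n) (Fin n) ℝ} (hM : M.rank ≤ k) :
    (1 / (m : ℝ)) * vnorm (calA A M) ^ 2 ≤ (1 + δ) * fnorm M ^ 2 :=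
  (h.2.2 M hM).2

lemma sqrt_measure_mul_transpose_self_le (h : RIP A k δ) {r : ℕ} (hr : r ≤ k)
    (D : Matrix (Fin n) (Fin r) ℝ) :
    √((1 / (m : ℝ)) * vnorm (calA A (D * Dᵀ)) ^ 2) ≤ √(1 + δ) * fnorm D ^ 2 := calc
  √((1 / (m : ℝ)) * vnorm (calA A (D * Dᵀ)) ^ 2) ≤ √((1 + δ) * fnorm (D * Dᵀ) ^ 2) :=
    Real.sqrt_le_sqrt <| h.measure_sq_le <|
      (rank_mul_le_left D Dᵀ).trans (D.rank_le_width.trans hr)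
  _ = √(1 + δ) * fnorm (D * Dᵀ) := by
    rw [Real.sqrt_mul h.one_add_nonneg, Real.sqrt_sq (fnorm_nonneg _)]
  _ ≤ √(1 + δ) * fnorm D ^ 2 :=
    mul_le_mul_of_nonneg_left (fnorm_mul_transpose_self_le D) (Real.sqrt_nonneg _)

end RIP

theorem hessian_bound_general {n m r : ℕ} {δ : ℝ}
    (A : Fin m → Matrix (Fin n) (Fin n) ℝ)
    (hRIP : RIP A (2 * r) δ)
    (Mstar : Matrix (Fin n) (Fin n) ℝ)
    (X D : Matrix (Fin n) (Fin r) ℝ) :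
    (2 / (m : ℝ)) * (vnorm (calA A (X * Dᵀ + D * Xᵀ)) ^ 2
        + 2 * vinner (calA A (X * Xᵀ - Mstar)) (calA A (D * Dᵀ)))
      ≤ 2 * (1 + δ) * fnorm (X * Dᵀ + D * Xᵀ) ^ 2
        + 4 * Real.sqrt ((1 + δ) * fc A Mstar X) * fnorm D ^ 2 := by
  have hsym := hRIP.measure_sq_le (rank_mul_transpose_add_le X D)
  have hcross : (1 / (m : ℝ)) * vinner (calA A (X * Xᵀ - Mstar)) (calA A (D * Dᵀ))
      ≤ √((1 + δ) * fc A Mstar X) * fnorm D ^ 2 := calc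
    _ ≤ √(fc A Mstar X) * √((1 / (m : ℝ)) * vnorm (calA A (D * Dᵀ)) ^ 2) :=
      smul_vinner_le_sqrt_mul_sqrt (by positivity) _ _
    _ ≤ √(fc A Mstar X) * (√(1 + δ) * fnorm D ^ 2) := by
      gcongr
      exact hRIP.sqrt_measure_mul_transpose_self_le (by omega) D
    _ = √((1 + δ) * fc A Mstar X) * fnorm D ^ 2 := by
      rw [Real.sqrt_mul hRIP.one_add_nonneg]; ring
  calc (2 / (m : ℝ)) * (vnorm (calA A (X * Dᵀ + D * Xᵀ)) ^ 2
        + 2 * vinner (calA A (X * Xᵀ - Mstar)) (calA A (D * Dᵀ)))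
      = 2 * ((1 / (m : ℝ)) * vnorm (calA A (X * Dᵀ + D * Xᵀ)) ^ 2)
        + 4 * ((1 / (m : ℝ)) * vinner (calA A (X * Xᵀ - Mstar)) (calA A (D * Dᵀ))) := by ring
    _ ≤ _ := by linarith

/-- bound on the Hessian quadratic form under RIP. -/
theorem hessian_bound {n m r rstar : ℕ} (hn : 0 < n) (hm : 0 < m)
    (hrstar : 0 < rstar) (hrr : rstar ≤ r) {δ : ℝ}
    (A : Fin m → Matrix (Fin n) (Fin n) ℝ) (hA : ∀ i, (A i).IsHermitian)
    (hRIP : RIP A (2 * r) δ)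
    (Mstar : Matrix (Fin n) (Fin n) ℝ) (hM : Mstar.PosSemidef)
    (hrank : Mstar.rank = rstar)
    (X D : Matrix (Fin n) (Fin r) ℝ) :
    (2 / (m : ℝ)) * (vnorm (calA A (X * Dᵀ + D * Xᵀ)) ^ 2
        + 2 * vinner (calA A (X * Xᵀ - Mstar)) (calA A (D * Dᵀ)))
      ≤ 2 * (1 + δ) * fnorm (X * Dᵀ + D * Xᵀ) ^ 2
        + 4 * Real.sqrt ((1 + δ) * fc A Mstar X) * fnorm D ^ 2 :=
  hessian_bound_general A hRIP Mstar X D
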